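/- For every integer d with 0 ≤ d ≤ n/2, the real vector space H°_{n,d} consisting of 0 together with the harmonic multilinear polynomials in x₁,…,xₙ all of whose monomials have degree exactly d has dimension C(n,d) − C(n,d−1), where C(n,−1) = 0. -/

import Mathlib

open MvPolynomial

/-- A multilinear polynomial: every monomial is squarefree. -/
def IsMultilinear {n : ℕ} (P : MvPolynomial (Fin n) ℝ) : Prop :=
  ∀ m ∈ P.support, ∀ i, m i ≤ 1

/-- A harmonic polynomial: the sum of all partial derivatives vanishes. -/
def IsHarmonic {n : ℕ} (P : MvPolynomial (Fin n) ℝ) : Prop :=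
  ∑ i, MvPolynomial.pderiv i P = 0

/-- A polynomial has pure degree `d` if all of its monomials have degree exactly `d`. -/
def IsPureDegree {n : ℕ} (P : MvPolynomial (Fin n) ℝ) (d : ℕ) : Prop :=
  ∀ m ∈ P.support, (∑ i, m i) = d

/-- The space `H°_{n,d}` of harmonic multilinear polynomials of pure degree `d`
(together with `0`). -/
noncomputable def pureHarmonicMultilinear (n d : ℕ) : Submodule ℝ (MvPolynomial (Fin n) ℝ) where
  carrier := {P | IsMultilinear P ∧ IsHarmonic P ∧ IsPureDegree P d}
  add_mem' := by
    rintro P Q ⟨hP1, hP2, hP3⟩ ⟨hQ1, hQ2, hQ3⟩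
    refine ⟨?_, ?_, ?_⟩
    · intro m hm i
      rcases Finset.mem_union.mp (MvPolynomial.support_add hm) with h | h
      · exact hP1 m h i
      · exact hQ1 m h i
    · unfold IsHarmonic at *
      simp only [map_add, Finset.sum_add_distrib, hP2, hQ2, add_zero]
    · intro m hm
      rcases Finset.mem_union.mp (MvPolynomial.support_add hm) with h | h
      · exact hP3 m h
      · exact hQ3 m h
  zero_mem' := by
    refine ⟨?_, ?_, ?_⟩
    · intro m hm i
      simp [MvPolynomial.support_zero] at hm
    · simp [IsHarmonic]
    · intro m hm
      simp [MvPolynomial.support_zero] at hm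
  smul_mem' := by
    rintro c P ⟨hP1, hP2, hP3⟩
    refine ⟨?_, ?_, ?_⟩
    · intro m hm i
      exact hP1 m (MvPolynomial.support_smul hm) i
    · unfold IsHarmonic at *
      rw [show (∑ i, MvPolynomial.pderiv i (c • P)) = c • ∑ i, MvPolynomial.pderiv i P by
        rw [Finset.smul_sum]
        exact Finset.sum_congr rfl fun i _ => (MvPolynomial.pderiv i).map_smul c P, hP2, smul_zero]
    · intro m hm
      exact hP3 m (MvPolynomial.support_smul hm)

/-!
A multilinear polynomial is the same thing as a function on subsets `S ⊆ [n]` (its coefficient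
at `∏_{i ∈ S} x_i`), and under this identification `∑ ∂/∂x_i` becomes the down operator
`(D f)(T) = ∑_{i ∉ T} f(T ∪ {i})`, which maps functions on `d`-sets to functions on
`(d-1)`-sets. So `H°_{n,d}` is the kernel of `D` on the `C(n,d)`-dimensional space of functions
on `d`-sets, and it suffices that `D` is onto the functions on `(d-1)`-sets when `2d ≤ n`.
The up operator `(U g)(S) = ∑_{j ∈ S} g(S \ {j})` is the transpose of `D`, and
`DU - UD = n - 2k` on functions on `k`-sets. Hence `⟪DUg, g⟫ = ‖Dg‖² + (n - 2k)‖g‖²`, so `DU` is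
injective, hence bijective, on functions on `k`-sets when `2k < n`, and `D` is surjective.
-/

noncomputable section

open Finset

namespace SubsetFun

section

variable {ι R : Type*} [CommSemiring R]

variable (ι R) in
def level (d : ℕ) : Submodule R (Finset ι → R) where
  carrier := {f | ∀ S, #S ≠ d → f S = 0}
  add_mem' hf hg S hS := by simp [hf S hS, hg S hS]
  zero_mem' _ _ := rfl
  smul_mem' c f hf S hS := by simp [hf S hS]

def levelEquiv (d : ℕ) : level ι R d ≃ₗ[R] ({S : Finset ι // #S = d} → R) where
  toFun f S := f.1 S
  map_add' _ _ := rfl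
  map_smul' _ _ := rfl
  invFun g := ⟨fun S => if h : #S = d then g ⟨S, h⟩ else 0, fun _ hS => dif_neg hS⟩
  left_inv f := Subtype.ext <| funext fun S => by
    by_cases h : #S = d
    · simp [h]
    · simp [h, f.2 S h]
  right_inv g := funext fun S => dif_pos S.2

lemma finrank_level [Fintype ι] [StrongRankCondition R] (d : ℕ) :
    Module.finrank R (level ι R d) = (Fintype.card ι).choose d := by
  rw [LinearEquiv.finrank_eq (levelEquiv d), Module.finrank_fintype_fun_eq_card,
    Fintype.card_finset_len]

variable [DecidableEq ι]

def up : (Finset ι → R) →ₗ[R] (Finset ι → R) where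
  toFun f S := ∑ j ∈ S, f (S.erase j)
  map_add' f g := by ext S; simp [sum_add_distrib]
  map_smul' c f := by ext S; simp [mul_sum]

lemma up_apply (f : Finset ι → R) (S : Finset ι) : up f S = ∑ j ∈ S, f (S.erase j) := rfl

lemma up_mem_level {d : ℕ} {f : Finset ι → R} (hf : f ∈ level ι R d) :
    up f ∈ level ι R (d + 1) := by
  intro S hS
  refine sum_eq_zero fun j hj => hf _ ?_
  have := card_pos.mpr ⟨j, hj⟩
  rw [card_erase_of_mem hj]
  omega

variable [Fintype ι]

def down : (Finset ι → R) →ₗ[R] (Finset ι → R) where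
  toFun f T := ∑ i ∈ Tᶜ, f (insert i T)
  map_add' f g := by ext T; simp [sum_add_distrib]
  map_smul' c f := by ext T; simp [mul_sum]

lemma down_apply (f : Finset ι → R) (T : Finset ι) :
    down f T = ∑ i ∈ Tᶜ, f (insert i T) := rfl

lemma down_mem_level {d : ℕ} {f : Finset ι → R} (hf : f ∈ level ι R (d + 1)) :
    down f ∈ level ι R d := by
  intro T hT
  refine sum_eq_zero fun i hi => hf _ ?_
  rw [card_insert_of_notMem (mem_compl.mp hi)]
  omega

lemma level_zero_le_ker_down : level ι R 0 ≤ LinearMap.ker down :=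
  fun _ hf => funext fun _ => sum_eq_zero fun _ _ => hf _ (by simp)

lemma sum_sum_compl_insert_eq_sum_sum_erase {M : Type*} [AddCommMonoid M]
    (F : Finset ι → Finset ι → M) :
    ∑ T, ∑ i ∈ Tᶜ, F (insert i T) T = ∑ S, ∑ j ∈ S, F S (S.erase j) := by
  rw [sum_sigma', sum_sigma']
  refine sum_nbij' (fun p => ⟨insert p.2 p.1, p.2⟩) (fun p => ⟨p.1.erase p.2, p.2⟩)
    ?_ ?_ ?_ ?_ ?_ <;> simp +contextual [insert_erase]

lemma down_dotProduct (f g : Finset ι → R) : down f ⬝ᵥ g = f ⬝ᵥ up g := by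
  simp only [dotProduct, down_apply, up_apply, sum_mul, mul_sum]
  exact sum_sum_compl_insert_eq_sum_sum_erase fun S T => f S * g T

lemma down_up_add_card_mul (f : Finset ι → R) (S : Finset ι) :
    down (up f) S + #S * f S = up (down f) S + #Sᶜ * f S := by
  have hdu : ∀ i ∈ Sᶜ, up f (insert i S) = f S + ∑ j ∈ S, f (insert i (S.erase j)) := by
    intro i hi
    rw [mem_compl] at hi
    rw [up_apply, sum_insert hi, erase_insert hi]
    congr 1
    exact sum_congr rfl fun j hj => by rw [erase_insert_of_ne (ne_of_mem_of_not_mem hj hi).symm]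
  have hud : ∀ j ∈ S, down f (S.erase j) = f S + ∑ i ∈ Sᶜ, f (insert i (S.erase j)) := by
    intro j hj
    rw [down_apply, compl_erase, sum_insert (by simpa using hj), insert_erase hj]
  rw [down_apply, up_apply, sum_congr rfl hdu, sum_congr rfl hud, sum_add_distrib, sum_add_distrib,
    sum_comm (s := S), sum_const, sum_const, nsmul_eq_mul, nsmul_eq_mul]
  ring

end

variable {ι : Type*} [Fintype ι] [DecidableEq ι]

lemma down_up_of_mem_level {R : Type*} [CommRing R] {k : ℕ} {f : Finset ι → R}
    (hf : f ∈ level ι R k) :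
    down (up f) = up (down f) + ((Fintype.card ι : R) - 2 * k) • f := by
  ext S
  have h := down_up_add_card_mul f S
  by_cases hS : #S = k
  · rw [card_compl, hS] at h
    have : k ≤ Fintype.card ι := hS ▸ card_le_univ S
    push_cast [this] at h
    simp only [Pi.add_apply, Pi.smul_apply, smul_eq_mul]
    linear_combination h
  · simpa [hf S hS] using h

variable {K : Type*} [Field K] [LinearOrder K] [IsStrictOrderedRing K]

lemma eq_zero_of_down_up_eq_zero {k : ℕ} (hk : 2 * k < Fintype.card ι) {f : Finset ι → K}
    (hf : f ∈ level ι K k) (h : down (up f) = 0) : f = 0 := by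
  have key :
      down (up f) ⬝ᵥ f = down f ⬝ᵥ down f + ((Fintype.card ι : K) - 2 * k) * (f ⬝ᵥ f) := by
    rw [down_up_of_mem_level hf, add_dotProduct, smul_dotProduct, dotProduct_comm,
      ← down_dotProduct, smul_eq_mul]
  have hc : (0 : K) < Fintype.card ι - 2 * k := by
    rw [sub_pos]
    exact_mod_cast hk
  have hDf : 0 ≤ down f ⬝ᵥ down f := Fintype.sum_nonneg fun _ => mul_self_nonneg _
  have hff : 0 ≤ f ⬝ᵥ f := Fintype.sum_nonneg fun _ => mul_self_nonneg _
  rw [h, zero_dotProduct] at key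
  exact dotProduct_self_eq_zero.mp (by nlinarith)

variable (ι K) in
def downLevel (k : ℕ) : level ι K (k + 1) →ₗ[K] level ι K k :=
  down.restrict fun _ => down_mem_level

variable (ι K) in
def upLevel (k : ℕ) : level ι K k →ₗ[K] level ι K (k + 1) :=
  up.restrict fun _ => up_mem_level

lemma downLevel_surjective {k : ℕ} (hk : 2 * k < Fintype.card ι) :
    Function.Surjective (downLevel ι K k) := by
  have hinj : Function.Injective (downLevel ι K k ∘ₗ upLevel ι K k) :=
    (injective_iff_map_eq_zero _).mpr fun f hf =>
      Subtype.ext (eq_zero_of_down_up_eq_zero hk f.2 (congrArg Subtype.val hf))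
  intro g
  obtain ⟨f, hf⟩ := LinearMap.injective_iff_surjective.mp hinj g
  exact ⟨upLevel ι K k f, hf⟩

lemma finrank_level_inf_ker_down {k : ℕ} (hk : 2 * k < Fintype.card ι) :
    Module.finrank K (level ι K (k + 1) ⊓ LinearMap.ker down : Submodule K (Finset ι → K)) +
      (Fintype.card ι).choose k = (Fintype.card ι).choose (k + 1) := by
  have h := (downLevel ι K k).finrank_range_add_finrank_ker
  rw [LinearMap.range_eq_top.mpr (downLevel_surjective hk), finrank_top, finrank_level,
    finrank_level, downLevel, LinearMap.ker_restrict, ← Submodule.finrank_map_subtype_eq,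
    Submodule.map_comap_subtype] at h
  omega

end SubsetFun

namespace MvPolynomial

variable {σ R : Type*} [DecidableEq σ] [CommSemiring R]

def sqfreeExp (S : Finset σ) : σ →₀ ℕ :=
  Finsupp.onFinset S (fun i => if i ∈ S then 1 else 0) fun _ => by simp

lemma sqfreeExp_apply (S : Finset σ) (i : σ) : sqfreeExp S i = if i ∈ S then 1 else 0 := rfl

@[simp] lemma support_sqfreeExp (S : Finset σ) : (sqfreeExp S).support = S := by
  ext i; simp [sqfreeExp_apply]

lemma sqfreeExp_injective : Function.Injective (sqfreeExp (σ := σ)) := fun S T h => by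
  rw [← support_sqfreeExp S, h, support_sqfreeExp]

lemma sqfreeExp_le_one (S : Finset σ) (i : σ) : sqfreeExp S i ≤ 1 := by
  rw [sqfreeExp_apply]; split <;> omega

lemma sqfreeExp_support {m : σ →₀ ℕ} (hm : ∀ i, m i ≤ 1) : sqfreeExp m.support = m := by
  ext i
  have := hm i
  simp only [sqfreeExp_apply, Finsupp.mem_support_iff]
  split <;> omega

lemma sum_sqfreeExp [Fintype σ] (S : Finset σ) : ∑ i, sqfreeExp S i = #S := by
  simp [sqfreeExp_apply]

lemma sqfreeExp_sub_single {S : Finset σ} {i : σ} (hi : i ∈ S) :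
    sqfreeExp S - Finsupp.single i 1 = sqfreeExp (S.erase i) := by
  ext j
  by_cases hj : j = i
  · simp [sqfreeExp_apply, hj, hi]
  · simp [sqfreeExp_apply, hj]

lemma pderiv_monomial_sqfreeExp (i : σ) (S : Finset σ) (a : R) :
    pderiv i (monomial (sqfreeExp S) a) =
      if i ∈ S then monomial (sqfreeExp (S.erase i)) a else 0 := by
  rw [pderiv_monomial, sqfreeExp_apply]
  split_ifs with hi
  · simp [sqfreeExp_sub_single hi]
  · simp

def toSubsetFun : MvPolynomial σ R →ₗ[R] (Finset σ → R) :=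
  LinearMap.pi fun S => lcoeff R (sqfreeExp S)

lemma toSubsetFun_apply (P : MvPolynomial σ R) (S : Finset σ) :
    toSubsetFun P S = coeff (sqfreeExp S) P := rfl

variable [Fintype σ]

def ofSubsetFun (f : Finset σ → R) : MvPolynomial σ R :=
  ∑ S, monomial (sqfreeExp S) (f S)

lemma coeff_ofSubsetFun (f : Finset σ → R) (m : σ →₀ ℕ) :
    coeff m (ofSubsetFun f) = ∑ S with sqfreeExp S = m, f S := by
  simp [ofSubsetFun, coeff_sum, coeff_monomial, sum_filter]

lemma coeff_sqfreeExp_ofSubsetFun (f : Finset σ → R) (S : Finset σ) :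
    coeff (sqfreeExp S) (ofSubsetFun f) = f S := by
  simp [coeff_ofSubsetFun, sqfreeExp_injective.eq_iff, filter_eq']

lemma toSubsetFun_ofSubsetFun (f : Finset σ → R) : toSubsetFun (ofSubsetFun f) = f := by
  ext S
  exact coeff_sqfreeExp_ofSubsetFun f S

lemma exists_of_mem_support_ofSubsetFun {f : Finset σ → R} {m : σ →₀ ℕ}
    (hm : m ∈ (ofSubsetFun f).support) : ∃ S, sqfreeExp S = m ∧ f S ≠ 0 := by
  rw [mem_support_iff, coeff_ofSubsetFun] at hm
  obtain ⟨S, hS, hfS⟩ := exists_ne_zero_of_sum_ne_zero hm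
  exact ⟨S, (mem_filter.mp hS).2, hfS⟩

lemma sum_pderiv_ofSubsetFun (f : Finset σ → R) :
    ∑ i, pderiv i (ofSubsetFun f) = ofSubsetFun (SubsetFun.down f) := by
  simp only [ofSubsetFun, map_sum, pderiv_monomial_sqfreeExp, SubsetFun.down_apply]
  rw [sum_comm]
  simp only [sum_ite_mem, univ_inter]
  exact (SubsetFun.sum_sum_compl_insert_eq_sum_sum_erase fun S T =>
    monomial (sqfreeExp T) (f S)).symm

end MvPolynomial

open SubsetFun

section

variable {n d : ℕ}

lemma ofSubsetFun_toSubsetFun {P : MvPolynomial (Fin n) ℝ} (hP : IsMultilinear P) :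
    ofSubsetFun (toSubsetFun P) = P := by
  ext m
  by_cases hm : ∀ i, m i ≤ 1
  · rw [← sqfreeExp_support hm, coeff_sqfreeExp_ofSubsetFun, toSubsetFun_apply]
  · push Not at hm
    obtain ⟨i, hi⟩ := hm
    have hP0 : coeff m P = 0 := notMem_support_iff.mp fun h => (hP m h i).not_gt hi
    rw [hP0, ← notMem_support_iff]
    intro h
    obtain ⟨S, rfl, -⟩ := exists_of_mem_support_ofSubsetFun h
    exact (sqfreeExp_le_one S i).not_gt hi

lemma isMultilinear_ofSubsetFun (f : Finset (Fin n) → ℝ) : IsMultilinear (ofSubsetFun f) :=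
  fun m hm i => by
    obtain ⟨S, rfl, -⟩ := exists_of_mem_support_ofSubsetFun hm
    exact sqfreeExp_le_one S i

lemma isPureDegree_ofSubsetFun {f : Finset (Fin n) → ℝ} (hf : f ∈ level (Fin n) ℝ d) :
    IsPureDegree (ofSubsetFun f) d := fun m hm => by
  obtain ⟨S, rfl, hS⟩ := exists_of_mem_support_ofSubsetFun hm
  rw [sum_sqfreeExp]
  by_contra h
  exact hS (hf S h)

lemma toSubsetFun_mem_level {P : MvPolynomial (Fin n) ℝ} (hP : IsPureDegree P d) :
    toSubsetFun P ∈ level (Fin n) ℝ d := fun S hS => by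
  by_contra h
  exact hS (sum_sqfreeExp S ▸ hP _ (mem_support_iff.mpr h))

lemma isHarmonic_ofSubsetFun {f : Finset (Fin n) → ℝ} (hf : down f = 0) :
    IsHarmonic (ofSubsetFun f) := by
  rw [IsHarmonic, sum_pderiv_ofSubsetFun, hf]
  simp [ofSubsetFun]

lemma down_toSubsetFun_eq_zero {P : MvPolynomial (Fin n) ℝ} (hP : IsMultilinear P)
    (hH : IsHarmonic P) : down (toSubsetFun P) = 0 := by
  have h := congrArg toSubsetFun (sum_pderiv_ofSubsetFun (toSubsetFun P))
  rwa [ofSubsetFun_toSubsetFun hP, hH, map_zero, toSubsetFun_ofSubsetFun, eq_comm] at h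

variable (n d) in
def pureHarmonicMultilinearEquiv :
    pureHarmonicMultilinear n d ≃ₗ[ℝ]
      (level (Fin n) ℝ d ⊓ LinearMap.ker down : Submodule ℝ (Finset (Fin n) → ℝ)) :=
  { toSubsetFun.restrict (p := pureHarmonicMultilinear n d) fun _ hP => Submodule.mem_inf.mpr
      ⟨toSubsetFun_mem_level hP.2.2, down_toSubsetFun_eq_zero hP.1 hP.2.1⟩ with
    invFun f := ⟨ofSubsetFun f.1, isMultilinear_ofSubsetFun f.1,
      isHarmonic_ofSubsetFun (Submodule.mem_inf.mp f.2).2,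
      isPureDegree_ofSubsetFun (Submodule.mem_inf.mp f.2).1⟩
    left_inv P := Subtype.ext (ofSubsetFun_toSubsetFun P.2.1)
    right_inv f := Subtype.ext (toSubsetFun_ofSubsetFun f.1) }

end

end

theorem finrank_pureHarmonicMultilinear {n d : ℕ} (hd : 2 * d ≤ n) :
    (Module.finrank ℝ (pureHarmonicMultilinear n d) : ℤ) =
      (n.choose d : ℤ) - (if d = 0 then 0 else (n.choose (d - 1) : ℤ)) := by
  rw [(pureHarmonicMultilinearEquiv n d).finrank_eq]
  rcases d with _ | k
  · rw [inf_eq_left.mpr SubsetFun.level_zero_le_ker_down, SubsetFun.finrank_level]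
    simp
  · have h := SubsetFun.finrank_level_inf_ker_down (ι := Fin n) (K := ℝ) (k := k)
      (by rw [Fintype.card_fin]; omega)
    rw [Fintype.card_fin] at h
    rw [if_neg k.succ_ne_zero, Nat.add_sub_cancel]
    omega
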